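/- arXiv:2202.03139 — 3 statements merged into one kernel-verified Lean document; each statement's English description precedes it below -/
import Mathlib

section
/- For non-negative integers m and k, the sum over n from 0 to m of (-m)_n (-n)_k / n! equals m! if m = k and 0 otherwise, where (a)_n denotes the Pochhammer symbol (rising factorial). -/
/-!
Both Pochhammer factors are signed binomial coefficients: `(-m)_n / n! = (-1)^n C(m, n)` and
`(-n)_k = (-1)^k k! C(n, k)`. So the sum is `(-1)^k k!` times `∑ₙ (-1)^n C(m, n) C(n, k)`, which up
to the sign `(-1)^m` is the `m`-th forward difference of `x ↦ C(x, k)` at `0`, namely `[m = k]`.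
-/

open Finset Polynomial

theorem neg_one_pow_eq_neg_one_pow_mul_neg_one_pow_sub {R : Type*} [Monoid R] [HasDistribNeg R]
    {m n : ℕ} (h : n ≤ m) : (-1 : R) ^ n = (-1) ^ m * (-1) ^ (m - n) := by
  obtain ⟨j, rfl⟩ := Nat.exists_eq_add_of_le h
  rw [Nat.add_sub_cancel_left, pow_add, mul_assoc, ← pow_add, Even.neg_one_pow ⟨j, rfl⟩, mul_one]

theorem ascPochhammer_eval_neg_natCast {R : Type*} [Ring R] (n k : ℕ) :
    (ascPochhammer R k).eval (-(n : R)) = (-1) ^ k * k.factorial * n.choose k := by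
  rw [ascPochhammer_eval_neg_eq_descPochhammer, descPochhammer_eval_eq_descFactorial,
    Nat.descFactorial_eq_factorial_mul_choose, Nat.cast_mul, mul_assoc]

theorem Int.alternating_sum_range_choose_mul_choose (m k : ℕ) :
    ∑ n ∈ Finset.range (m + 1), (-1 : ℤ) ^ n * m.choose n * n.choose k
      = if m = k then (-1) ^ m else 0 := by
  have hdiff := fwdDiff_iter_eq_sum_shift 1 (fun x ↦ x.choose k : ℕ → ℤ) m 0
  rw [fwdDiff_iter_choose_zero] at hdiff
  simp only [zero_add, smul_eq_mul, mul_one] at hdiff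
  have hsign : ∀ n ∈ Finset.range (m + 1),
      (-1 : ℤ) ^ n * m.choose n * n.choose k
        = (-1) ^ m * ((-1) ^ (m - n) * m.choose n * n.choose k) := by
    intro n hn
    rw [neg_one_pow_eq_neg_one_pow_mul_neg_one_pow_sub (mem_range_succ_iff.mp hn)]
    ring
  rw [sum_congr rfl hsign, ← mul_sum, ← hdiff]
  split_ifs <;> simp

theorem pochhammer_delta_sum (m k : ℕ) :
    ∑ n ∈ Finset.range (m + 1),
      (ascPochhammer ℚ n).eval (-(m : ℚ)) * (ascPochhammer ℚ k).eval (-(n : ℚ))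
        / (Nat.factorial n : ℚ)
    = if m = k then (Nat.factorial m : ℚ) else 0 := by
  have hterm : ∀ n ∈ Finset.range (m + 1),
      (ascPochhammer ℚ n).eval (-(m : ℚ)) * (ascPochhammer ℚ k).eval (-(n : ℚ))
          / (Nat.factorial n : ℚ)
        = (-1) ^ k * k.factorial * ((-1) ^ n * m.choose n * n.choose k : ℤ) := by
    intro n _
    rw [ascPochhammer_eval_neg_natCast, ascPochhammer_eval_neg_natCast]
    push_cast
    field_simp
  rw [sum_congr rfl hterm, ← mul_sum, ← Int.cast_sum, Int.alternating_sum_range_choose_mul_choose]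
  split_ifs with hmk
  · subst hmk
    push_cast
    rw [mul_right_comm, ← mul_pow, neg_one_mul, neg_neg, one_pow, one_mul]
  · simp
end

section
/- For integers 0 ≤ k ≤ n, ε ∈ {0,1}, and a real parameter μ with μ + 1/2 not a non-positive integer, the identity (1/2)_{k+ε} / (μ + 1/2)_{k+ε} = [(1/2)_{n+ε} / (μ + 1/2)_{n+ε}] · Σ_{s=0}^{n-k} (μ)_s (-n+k)_s / (s! · (-n - ε + 1/2)_s) holds. -/
/-!
Write `n = k + m`. The sum is a terminating `₂F₁(-m, μ; c; 1)` with `c = 1/2 - n - ε`, which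
Chu–Vandermonde evaluates as `(c - μ)ₘ / (c)ₘ`. Reflection `(x)ₘ = (-1)ᵐ (1 - m - x)ₘ` turns this
into `(μ + 1/2 + k + ε)ₘ / (1/2 + k + ε)ₘ`, which is exactly what the splitting
`(x)_(k+ε+m) = (x)_(k+ε) (x + k + ε)ₘ` of the prefactor cancels.
-/

open Finset Polynomial

section CommRing

variable {R : Type*} [CommRing R]

theorem ascPochhammer_eval_add (a b : ℕ) (x : R) :
    (ascPochhammer R (a + b)).eval x
      = (ascPochhammer R a).eval x * (ascPochhammer R b).eval (x + a) := by
  rw [← ascPochhammer_mul, eval_mul, eval_comp]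
  simp

theorem ascPochhammer_eval_eq_neg_one_pow_mul {x y : R} {m : ℕ} (h : x + y + m = 1) :
    (ascPochhammer R m).eval x = (-1) ^ m * (ascPochhammer R m).eval y := by
  obtain rfl : y = -x - m + 1 := by linear_combination h
  rw [← descPochhammer_eval_eq_ascPochhammer, ← ascPochhammer_eval_neg_eq_descPochhammer, neg_neg]

theorem ascPochhammer_eval_neg_natCast_s1 (m s : ℕ) :
    (ascPochhammer R s).eval (-(m : R)) = (-1) ^ s * s.factorial * m.choose s := by
  rw [ascPochhammer_eval_neg_eq_descPochhammer, descPochhammer_eval_eq_descFactorial,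
    Nat.descFactorial_eq_factorial_mul_choose, Nat.cast_mul, mul_assoc]

/-- Chu–Vandermonde: the falling-factorial binomial theorem for `(-b) + (c + m - 1)`. -/
theorem ascPochhammer_eval_sub_eq_sum (b c : R) (m : ℕ) :
    (ascPochhammer R m).eval (c - b) = ∑ s ∈ range (m + 1),
      (-1) ^ s * m.choose s * (ascPochhammer R s).eval b * (ascPochhammer R (m - s)).eval (c + s) := by
  have h := Ring.descPochhammer_smeval_add (r := -b) (s := c + m - 1) m (Commute.all _ _)
  simp only [descPochhammer_smeval_eq_ascPochhammer, ascPochhammer_smeval_eq_eval] at h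
  rw [Finset.Nat.sum_antidiagonal_eq_sum_range_succ_mk] at h
  convert h using 1
  · congr 1
    ring
  · refine sum_congr rfl fun s hs => ?_
    have hsm : s ≤ m := Nat.lt_succ_iff.mp (mem_range.mp hs)
    rw [ascPochhammer_eval_eq_neg_one_pow_mul (x := -b - s + 1) (y := b) (by ring),
      Nat.cast_sub hsm, show c + m - 1 - (m - s) + 1 = c + s by ring]
    ring

end CommRing

theorem ascPochhammer_eval_ne_zero {R : Type*} [CommRing R] [IsDomain R] {x : R}
    (hx : ∀ j : ℕ, x ≠ -(j : R)) (n : ℕ) : (ascPochhammer R n).eval x ≠ 0 := by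
  rw [Ne, ascPochhammer_eval_eq_zero_iff]
  rintro ⟨j, -, hj⟩
  exact hx j (by rw [hj, neg_neg])

/-- Chu–Vandermonde in hypergeometric form: `₂F₁(-m, b; c; 1) = (c - b)ₘ / (c)ₘ`. -/
theorem sum_ascPochhammer_neg_natCast_div {K : Type*} [Field K] [CharZero K] (b c : K) (m : ℕ)
    (hc : (ascPochhammer K m).eval c ≠ 0) :
    ∑ s ∈ range (m + 1), (ascPochhammer K s).eval b * (ascPochhammer K s).eval (-(m : K))
        / (s.factorial * (ascPochhammer K s).eval c)
      = (ascPochhammer K m).eval (c - b) / (ascPochhammer K m).eval c := by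
  rw [ascPochhammer_eval_sub_eq_sum, sum_div]
  refine sum_congr rfl fun s hs => ?_
  have hsm : s + (m - s) = m := Nat.add_sub_cancel' (Nat.lt_succ_iff.mp (mem_range.mp hs))
  rw [← hsm, ascPochhammer_eval_add, mul_ne_zero_iff] at hc
  rw [← hsm, ascPochhammer_eval_add, ascPochhammer_eval_neg_natCast_s1, hsm]
  field_simp [hc.1, hc.2, s.factorial_ne_zero]

theorem pochhammer_ratio_sum_identity_general (μ : ℝ) (hμ : ∀ j : ℕ, μ + 1/2 ≠ -(j : ℝ))
    (n k ε : ℕ) (hk : k ≤ n) :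
    (ascPochhammer ℝ (k + ε)).eval (1/2) / (ascPochhammer ℝ (k + ε)).eval (μ + 1/2)
    = (ascPochhammer ℝ (n + ε)).eval (1/2) / (ascPochhammer ℝ (n + ε)).eval (μ + 1/2)
      * ∑ s ∈ Finset.range (n - k + 1),
          (ascPochhammer ℝ s).eval μ * (ascPochhammer ℝ s).eval (-(n : ℝ) + k)
            / ((Nat.factorial s : ℝ) * (ascPochhammer ℝ s).eval (-(n : ℝ) - ε + 1/2)) := by
  obtain ⟨m, rfl⟩ := Nat.exists_eq_add_of_le hk
  set p := k + ε
  have hc : (ascPochhammer ℝ m).eval (-((k + m : ℕ) : ℝ) - ε + 1/2)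
      = (-1) ^ m * (ascPochhammer ℝ m).eval (1/2 + (p : ℝ)) :=
    ascPochhammer_eval_eq_neg_one_pow_mul (by push_cast [p]; ring)
  have hcμ : (ascPochhammer ℝ m).eval (-((k + m : ℕ) : ℝ) - ε + 1/2 - μ)
      = (-1) ^ m * (ascPochhammer ℝ m).eval (μ + 1/2 + p) :=
    ascPochhammer_eval_eq_neg_one_pow_mul (by push_cast [p]; ring)
  have hX : 0 < (ascPochhammer ℝ m).eval (1/2 + (p : ℝ)) := ascPochhammer_pos _ _ (by positivity)
  have hμp : ∀ j : ℕ, μ + 1/2 + p ≠ -(j : ℝ) := fun j h => hμ (p + j) (by push_cast; linarith)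
  rw [Nat.add_sub_cancel_left, show -((k + m : ℕ) : ℝ) + k = -(m : ℝ) by push_cast; ring,
    sum_ascPochhammer_neg_natCast_div _ _ _ (by rw [hc]; positivity), hc, hcμ,
    show k + m + ε = p + m by omega, ascPochhammer_eval_add p m, ascPochhammer_eval_add p m]
  have hB := ascPochhammer_eval_ne_zero hμ p
  have hY := ascPochhammer_eval_ne_zero hμp m
  generalize (ascPochhammer ℝ m).eval (1/2 + (p : ℝ)) = X at hX ⊢
  generalize (ascPochhammer ℝ m).eval (μ + 1/2 + (p : ℝ)) = Y at hY ⊢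
  field_simp [hX.ne']

theorem pochhammer_ratio_sum_identity (μ : ℝ) (hμ : ∀ j : ℕ, μ + 1/2 ≠ -(j : ℝ))
    (n k ε : ℕ) (hk : k ≤ n) (hε : ε ≤ 1) :
    (ascPochhammer ℝ (k + ε)).eval (1/2) / (ascPochhammer ℝ (k + ε)).eval (μ + 1/2)
    = (ascPochhammer ℝ (n + ε)).eval (1/2) / (ascPochhammer ℝ (n + ε)).eval (μ + 1/2)
      * ∑ s ∈ Finset.range (n - k + 1),
          (ascPochhammer ℝ s).eval μ * (ascPochhammer ℝ s).eval (-(n : ℝ) + k)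
            / ((Nat.factorial s : ℝ) * (ascPochhammer ℝ s).eval (-(n : ℝ) - ε + 1/2)) :=
  pochhammer_ratio_sum_identity_general μ hμ n k ε hk
end

section
/- Let V_μ be the linear operator on real polynomials defined on monomials by V_μ(x^{2n+ε}) = [(1/2)_{n+ε}/(μ+1/2)_{n+ε}] x^{2n+ε} for ε ∈ {0,1}, and let D_μ = d/dx + (μ/x)(1 - R) be the Dunkl operator, where R f(x) = f(-x). Then D_μ V_μ = V_μ d/dx on the space of polynomials. -/
open Polynomial in
noncomputable def dunklOp (μ : ℝ) (p : Polynomial ℝ) : Polynomial ℝ :=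
  Polynomial.derivative p + C μ * (p - p.comp (-X)).divX

open Polynomial

/-!
Both sides are linear in `p`, so it suffices to compare them on monomials. Writing
`c k = (1/2)_k / (μ+1/2)_k`, on even monomials `D_μ` is just `d/dx` and both sides agree
because `V` scales `x^{2m+2}` and `x^{2m+1}` by the same `c (m+1)`. On odd monomials
`D_μ (x^{2m+1}) = (2m+1+2μ) x^{2m}`, and the identity reduces to
`c (m+1) (2m+1+2μ) = (2m+1) c m`, the Pochhammer recursion `(a)_{m+1} = (a)_m (a+m)`.
-/

noncomputable def dunklLinearMap (μ : ℝ) : ℝ[X] →ₗ[ℝ] ℝ[X] where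
  toFun := dunklOp μ
  map_add' p q := by
    simp only [dunklOp, derivative_add, add_comp, add_sub_add_comm, divX_add, mul_add]
    ring
  map_smul' a p := by
    simp only [dunklOp, smul_eq_C_mul, derivative_C_mul, mul_comp, C_comp, ← mul_sub,
      divX_C_mul, RingHom.id_apply]
    ring

@[simp]
theorem dunklLinearMap_apply (μ : ℝ) (p : ℝ[X]) : dunklLinearMap μ p = dunklOp μ p := rfl

theorem dunklOp_C_mul (μ a : ℝ) (p : ℝ[X]) : dunklOp μ (C a * p) = C a * dunklOp μ p := by
  simpa only [dunklLinearMap_apply, smul_eq_C_mul] using (dunklLinearMap μ).map_smul a p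

theorem dunklOp_X_pow_even (μ : ℝ) (m : ℕ) :
    dunklOp μ (X ^ (2 * m)) = derivative (X ^ (2 * m)) := by
  have hR : (X ^ (2 * m) : ℝ[X]).comp (-X) = X ^ (2 * m) := by
    rw [pow_comp, X_comp, (even_two_mul m).neg_pow]
  rw [dunklOp, hR, sub_self, divX_zero, mul_zero, add_zero]

theorem dunklOp_X_pow_odd (μ : ℝ) (m : ℕ) :
    dunklOp μ (X ^ (2 * m + 1)) = C (2 * m + 1 + 2 * μ) * X ^ (2 * m) := by
  have hR : (X ^ (2 * m + 1) : ℝ[X]).comp (-X) = -X ^ (2 * m + 1) := by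
    rw [pow_comp, X_comp, (odd_two_mul_add_one m).neg_pow]
  rw [dunklOp, hR, sub_neg_eq_add, ← two_mul, ← C_ofNat, divX_C_mul, divX_X_pow,
    if_neg (Nat.succ_ne_zero _), Nat.add_sub_cancel, derivative_X_pow, Nat.add_sub_cancel]
  simp only [C_add, C_mul, Nat.cast_add, Nat.cast_mul, Nat.cast_ofNat, Nat.cast_one, C_1]
  ring

noncomputable def pochhammerRatio (μ : ℝ) (k : ℕ) : ℝ :=
  (ascPochhammer ℝ k).eval (1/2) / (ascPochhammer ℝ k).eval (μ + 1/2)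

theorem pochhammerRatio_succ_mul (μ : ℝ) (m : ℕ) (hm : μ + 1/2 ≠ -(m : ℝ)) :
    pochhammerRatio μ (m + 1) * (2 * m + 1 + 2 * μ) = (2 * m + 1) * pochhammerRatio μ m := by
  have hz : μ + 1/2 + m ≠ 0 := fun h => hm (by linarith)
  rw [pochhammerRatio, pochhammerRatio, ascPochhammer_succ_eval, ascPochhammer_succ_eval,
    mul_div_mul_comm, show (2 * m + 1 + 2 * μ : ℝ) = 2 * (μ + 1/2 + m) by ring,
    show (2 * m + 1 : ℝ) = 2 * (1/2 + m) by ring]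
  linear_combination 2 * ((ascPochhammer ℝ m).eval (1/2) / (ascPochhammer ℝ m).eval (μ + 1/2))
    * div_mul_cancel₀ (1/2 + m : ℝ) hz

theorem LinearMap.map_C_mul {R : Type*} [CommSemiring R] (V : R[X] →ₗ[R] R[X]) (a : R)
    (p : R[X]) :
    V (C a * p) = C a * V p := by
  rw [← smul_eq_C_mul, map_smul, smul_eq_C_mul]

section Intertwining

variable {μ : ℝ} {V : ℝ[X] →ₗ[ℝ] ℝ[X]}
  (hV_even : ∀ m : ℕ, V (X ^ (2 * m)) = C (pochhammerRatio μ m) * X ^ (2 * m))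
  (hV_odd : ∀ m : ℕ, V (X ^ (2 * m + 1)) = C (pochhammerRatio μ (m + 1)) * X ^ (2 * m + 1))
include hV_even hV_odd

theorem dunklOp_map_X_pow_even (m : ℕ) :
    dunklOp μ (V (X ^ (2 * m))) = V (derivative (X ^ (2 * m))) := by
  rw [hV_even, dunklOp_C_mul, dunklOp_X_pow_even]
  cases m with
  | zero => simp
  | succ k =>
    rw [derivative_X_pow, show 2 * (k + 1) - 1 = 2 * k + 1 by omega, V.map_C_mul, hV_odd,
      mul_left_comm]

theorem dunklOp_map_X_pow_odd (m : ℕ) (hm : μ + 1/2 ≠ -(m : ℝ)) :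
    dunklOp μ (V (X ^ (2 * m + 1))) = V (derivative (X ^ (2 * m + 1))) := by
  rw [hV_odd, dunklOp_C_mul, dunklOp_X_pow_odd, derivative_X_pow, Nat.add_sub_cancel,
    V.map_C_mul, hV_even, ← mul_assoc, ← mul_assoc, ← C_mul, ← C_mul,
    pochhammerRatio_succ_mul μ m hm]
  norm_num

end Intertwining

theorem dunkl_intertwining_property (μ : ℝ) (hμ : ∀ j : ℕ, μ + 1/2 ≠ -(j : ℝ))
    (V : Polynomial ℝ →ₗ[ℝ] Polynomial ℝ)
    (hV : ∀ m ε : ℕ, ε ≤ 1 →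
      V (X^(2*m + ε))
        = C ((ascPochhammer ℝ (m + ε)).eval (1/2)
              / (ascPochhammer ℝ (m + ε)).eval (μ + 1/2)) * X^(2*m + ε)) :
    ∀ p : Polynomial ℝ, dunklOp μ (V p) = V (Polynomial.derivative p) := by
  have hV_even (m : ℕ) : V (X ^ (2 * m)) = C (pochhammerRatio μ m) * X ^ (2 * m) :=
    hV m 0 zero_le_one
  have hV_odd (m : ℕ) : V (X ^ (2 * m + 1)) = C (pochhammerRatio μ (m + 1)) * X ^ (2 * m + 1) :=
    hV m 1 le_rfl
  suffices dunklLinearMap μ ∘ₗ V = V ∘ₗ derivative from fun p => LinearMap.congr_fun this p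
  refine lhom_ext' fun n => LinearMap.ext_ring ?_
  simp only [LinearMap.comp_apply, monomial_one_right_eq_X_pow, dunklLinearMap_apply]
  obtain ⟨m, rfl | rfl⟩ := Nat.even_or_odd' n
  · exact dunklOp_map_X_pow_even hV_even hV_odd m
  · exact dunklOp_map_X_pow_odd hV_even hV_odd m (hμ m)
end
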